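/- arXiv:2510.05838 — 5 statements merged into one kernel-verified Lean document; each statement's English description precedes it below -/
import Mathlib

section
/- Let G be a bipartite graph and let S be a stable set of vertices that meets at least one edge but is not a vertex cover. Then the edge colouring defined by setting an edge red if it has an endpoint in S, and blue otherwise, is a NAC-colouring of G. Moreover, every cycle of G has an even number of red edges and an even number of blue edges under this colouring. -/
open SimpleGraph

/-- A stable (independent) set of vertices. -/
def StableSet {V : Type*} (G : SimpleGraph V) (S : Set V) : Prop :=
  ∀ ⦃u v : V⦄, u ∈ S → v ∈ S → ¬ G.Adj u v

/-- A NAC-colouring: a 2-colouring (red = `true`, blue = `false`) of the edges, using both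
colours, such that no cycle contains exactly one red edge or exactly one blue edge. -/
def IsNACColouring {V : Type*} (G : SimpleGraph V) (c : Sym2 V → Bool) : Prop :=
  (∃ e ∈ G.edgeSet, c e = true) ∧ (∃ e ∈ G.edgeSet, c e = false) ∧
    ∀ ⦃v : V⦄ (w : G.Walk v v), w.IsCycle →
      (w.edges.filter fun e => c e).length ≠ 1 ∧
      (w.edges.filter fun e => !(c e)).length ≠ 1

/-- In a bipartite graph, colouring red exactly those edges meeting a stable set `S` that
meets some edge but is not a vertex cover gives a NAC-colouring, and every cycle has an even
number of red edges and an even number of blue edges. -/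
theorem stmt1 {V : Type*} (G : SimpleGraph V) (hbip : G.Colorable 2)
    (S : Set V) (hS : StableSet G S)
    (hmeets : ∃ e ∈ G.edgeSet, ∃ v ∈ S, v ∈ e)
    (hnotcover : ∃ e ∈ G.edgeSet, ∀ v ∈ S, v ∉ e)
    (c : Sym2 V → Bool) (hc : ∀ e ∈ G.edgeSet, (c e = true ↔ ∃ v ∈ S, v ∈ e)) :
    IsNACColouring G c ∧
    ∀ ⦃v : V⦄ (w : G.Walk v v), w.IsCycle →
      Even (w.edges.filter fun e => c e).length ∧
      Even (w.edges.filter fun e => !(c e)).length := by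
  classical
  obtain ⟨C⟩ := hbip
  -- parity of red edges along any walk
  have key : ∀ ⦃u v : V⦄ (w : G.Walk u v),
      (Even (w.edges.filter fun e => c e).length ↔ ((u ∈ S) ↔ (v ∈ S))) := by
    intro u v w
    induction w with
    | nil => simp
    | @cons u b v h p ih =>
      have hedge : s(u, b) ∈ G.edgeSet := h
      by_cases hcb : c s(u, b) = true
      · obtain ⟨x, hxS, hxe⟩ := (hc _ hedge).mp hcb
        have hone : (u ∈ S ∧ b ∉ S) ∨ (u ∉ S ∧ b ∈ S) := by
          have hnb : ¬(u ∈ S ∧ b ∈ S) := fun ⟨h1, h2⟩ => hS h1 h2 h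
          rcases Sym2.mem_iff.mp hxe with rfl | rfl
          · exact Or.inl ⟨hxS, fun hb => hnb ⟨hxS, hb⟩⟩
          · exact Or.inr ⟨fun hu => hnb ⟨hu, hxS⟩, hxS⟩
        simp only [Walk.edges_cons, List.filter_cons, hcb, if_pos, List.length_cons,
          Nat.even_add_one, ih]
        rcases hone with ⟨h1, h2⟩ | ⟨h1, h2⟩ <;> tauto
      · have hnu : u ∉ S := fun hu => hcb ((hc _ hedge).mpr ⟨u, hu, by simp⟩)
        have hnb : b ∉ S := fun hb => hcb ((hc _ hedge).mpr ⟨b, hb, by simp⟩)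
        simp only [Walk.edges_cons, List.filter_cons, hcb, if_neg, ih]
        tauto
  -- parity of walk length via 2-coloring
  have key2 : ∀ ⦃u v : V⦄ (w : G.Walk u v), Even w.length ↔ C u = C v := by
    intro u v w
    induction w with
    | nil => simp
    | @cons u b v h p ih =>
      have hne : C u ≠ C b := C.valid h
      have hfin : ∀ x y z : Fin 2, x ≠ y → ((x = z) ↔ ¬(y = z)) := by decide
      simp only [Walk.length_cons, Nat.even_add_one, ih]
      rw [← hfin _ _ _ hne]
  have evens : ∀ ⦃v : V⦄ (w : G.Walk v v),
      Even (w.edges.filter fun e => c e).length ∧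
      Even (w.edges.filter fun e => !(c e)).length := by
    intro v w
    have hred : Even (w.edges.filter fun e => c e).length := (key w).mpr Iff.rfl
    have htot : Even w.edges.length := by
      rw [w.length_edges]
      exact (key2 w).mpr rfl
    have hsum : w.edges.length = (w.edges.filter fun e => c e).length +
        (w.edges.filter fun e => !(c e)).length := by
      rw [← List.countP_eq_length_filter, ← List.countP_eq_length_filter]
      have := List.length_eq_countP_add_countP (fun e => c e) (l := w.edges)
      simpa using this
    refine ⟨hred, ?_⟩
    rw [hsum, Nat.even_add] at htot
    exact htot.mp hred
  refine ⟨⟨?_, ?_, fun v w _ => ?_⟩, fun v w _ => evens w⟩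
  · obtain ⟨e, he, hv⟩ := hmeets
    exact ⟨e, he, (hc e he).mpr hv⟩
  · obtain ⟨e, he, hv⟩ := hnotcover
    refine ⟨e, he, ?_⟩
    by_contra hct
    rw [Bool.not_eq_false] at hct
    obtain ⟨x, hx, hxe⟩ := (hc e he).mp hct
    exact hv x hx hxe
  · refine ⟨fun h1 => ?_, fun h1 => ?_⟩
    · have := (evens w).1; rw [h1] at this; simp at this
    · have := (evens w).2; rw [h1] at this; simp at this
end

section
/- The property of being connected and having no NAC-colouring is monotone under adding edges: if G' is a spanning subgraph of G, G' is connected, and G' has no NAC-colouring, then G is connected and has no NAC-colouring. Equivalently (contrapositive form): if G' is a spanning subgraph of G and G is connected and has a NAC-colouring, then G' is disconnected or has a NAC-colouring. -/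
open SimpleGraph

lemma edges_mapLe {V : Type*} {G G' : SimpleGraph V} (hle : G' ≤ G) {u v : V}
    (p : G'.Walk u v) : (p.mapLe hle).edges = p.edges := by
  have h : ⇑(Hom.ofLE hle) = _root_.id := rfl
  rw [Walk.mapLe, Walk.edges_map, h, Sym2.map_id, List.map_id]

/-- Being connected with no NAC-colouring is monotone under adding edges. -/
theorem stmt4 {V : Type*} (G G' : SimpleGraph V) (hle : G' ≤ G)
    (hconn : G'.Connected) (hnac : ¬ ∃ c : Sym2 V → Bool, IsNACColouring G' c) :
    G.Connected ∧ ¬ ∃ c : Sym2 V → Bool, IsNACColouring G c := by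
  refine ⟨hconn.mono hle, ?_⟩
  rintro ⟨c, ⟨er, her, hcr⟩, ⟨eb, heb, hcb⟩, hcyc⟩
  apply hnac
  classical
  by_cases hR : ∃ e ∈ G'.edgeSet, c e = true
  · by_cases hB : ∃ e ∈ G'.edgeSet, c e = false
    · refine ⟨c, hR, hB, fun v w hw => ?_⟩
      have h := hcyc (w.mapLe hle) (hw.mapLe hle)
      rwa [edges_mapLe hle] at h
    · -- all G' edges are red; close a blue edge of G by a red path
      push_neg at hB
      induction eb using Sym2.ind with
      | _ u v =>
        rw [mem_edgeSet] at heb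
        obtain ⟨w0⟩ := hconn.preconnected v u
        set p := w0.toPath with hp
        have hq : ((p : G'.Walk v u).mapLe hle).IsPath := (Walk.mapLe_isPath hle).2 p.2
        have hall : ∀ e ∈ (p : G'.Walk v u).edges, c e = true := by
          intro e he
          have := hB e ((p : G'.Walk v u).edges_subset_edgeSet he)
          simpa using this
        have hne : s(u, v) ∉ ((p : G'.Walk v u).mapLe hle).edges := by
          rw [edges_mapLe hle]
          intro h
          rw [hall _ h] at hcb
          simp at hcb
        have hcycle := Path.cons_isCycle ⟨(p : G'.Walk v u).mapLe hle, hq⟩ heb hne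
        have h := (hcyc _ hcycle).2
        exfalso
        apply h
        rw [Walk.edges_cons, List.filter_cons_of_pos (by simp [hcb]),
          List.filter_eq_nil_iff.2 ?_]
        · rfl
        · intro e he
          rw [edges_mapLe hle] at he
          simp [hall e he]
  · -- all G' edges are blue; close a red edge of G by a blue path
    push_neg at hR
    induction er using Sym2.ind with
    | _ u v =>
      rw [mem_edgeSet] at her
      obtain ⟨w0⟩ := hconn.preconnected v u
      set p := w0.toPath with hp
      have hq : ((p : G'.Walk v u).mapLe hle).IsPath := (Walk.mapLe_isPath hle).2 p.2
      have hall : ∀ e ∈ (p : G'.Walk v u).edges, c e = false := by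
        intro e he
        have := hR e ((p : G'.Walk v u).edges_subset_edgeSet he)
        simpa using this
      have hne : s(u, v) ∉ ((p : G'.Walk v u).mapLe hle).edges := by
        rw [edges_mapLe hle]
        intro h
        rw [hall _ h] at hcr
        simp at hcr
      have hcycle := Path.cons_isCycle ⟨(p : G'.Walk v u).mapLe hle, hq⟩ her hne
      have h := (hcyc _ hcycle).1
      exfalso
      apply h
      rw [Walk.edges_cons, List.filter_cons_of_pos (by simp [hcr]),
        List.filter_eq_nil_iff.2 ?_]
      · rfl
      · intro e he
        rw [edges_mapLe hle] at he
        simp [hall e he]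
end

section
/- Let G be a graph with a NAC-colouring. If R is a maximal connected subgraph all of whose edges are red, and B is a maximal connected subgraph all of whose edges are blue, then V(R) ∩ V(B) is a stable set in G. -/
open SimpleGraph

/-- A monochromatic component: a maximal connected subgraph all of whose edges
receive colour `b`. -/
def IsMonoComponent {V : Type*} (G : SimpleGraph V) (c : Sym2 V → Bool) (b : Bool)
    (H : G.Subgraph) : Prop :=
  H.Connected ∧ (∀ e ∈ H.edgeSet, c e = b) ∧
    ∀ H' : G.Subgraph, H ≤ H' → H'.Connected → (∀ e ∈ H'.edgeSet, c e = b) → H' = H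


lemma mono_helper {V : Type*} (G : SimpleGraph V) (c : Sym2 V → Bool)
    (hc : IsNACColouring G c) (b : Bool) (H : G.Subgraph)
    (hH : H.Connected) (hHc : ∀ e ∈ H.edgeSet, c e = b)
    {u v : V} (hu : u ∈ H.verts) (hv : v ∈ H.verts)
    (hadj : G.Adj u v) (hcol : c s(u, v) = !b) : False := by
  classical
  obtain ⟨q⟩ := hH ⟨u, hu⟩ ⟨v, hv⟩
  set pp : G.Path u v := (q.map H.hom).toPath with hpp
  set p : G.Walk u v := ↑pp with hp
  have hpedges : ∀ e ∈ p.edges, e ∈ H.edgeSet := by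
    intro e he
    have := Walk.edges_toPath_subset (q.map H.hom) he
    rw [Walk.edges_map, List.mem_map] at this
    obtain ⟨e', he', rfl⟩ := this
    induction e' with
    | h x y =>
      have : H.coe.Adj x y := Walk.adj_of_mem_edges q he'
      exact this
  have hnot : s(u, v) ∉ p.edges := by
    intro h
    have := hHc _ (hpedges _ h)
    rw [hcol] at this
    simp at this
  have hcyc : (Walk.cons hadj.symm p).IsCycle :=
    Path.cons_isCycle pp hadj.symm (by rwa [Sym2.eq_swap] at hnot)
  have := hc.2.2 _ hcyc
  have hedges : (Walk.cons hadj.symm p).edges = s(v, u) :: p.edges := rfl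
  cases b with
  | true =>
    apply this.2
    rw [hedges, List.filter_cons]
    have h1 : (!(c s(v,u))) = true := by rw [Sym2.eq_swap]; simp [hcol]
    rw [if_pos h1]
    have : ∀ e ∈ p.edges, (!(c e)) = false := by
      intro e he; simp [hHc _ (hpedges _ he)]
    rw [List.filter_eq_nil_iff.mpr (by intro e he; simp [hHc _ (hpedges _ he)])]; rfl
  | false =>
    apply this.1
    rw [hedges, List.filter_cons]
    have h1 : c s(v,u) = true := by rw [Sym2.eq_swap]; simpa using hcol
    rw [if_pos h1]
    rw [List.filter_eq_nil_iff.mpr (by intro e he; simp [hHc _ (hpedges _ he)])]; rfl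

/-- The intersection of the vertex sets of a red component and a blue component of a
NAC-colouring is a stable set. -/
theorem stmt5 {V : Type*} (G : SimpleGraph V) (c : Sym2 V → Bool)
    (hc : IsNACColouring G c) (R B : G.Subgraph)
    (hR : IsMonoComponent G c true R) (hB : IsMonoComponent G c false B) :
    StableSet G (R.verts ∩ B.verts) := by
  rintro u v ⟨huR, huB⟩ ⟨hvR, hvB⟩ hadj
  cases h : c s(u, v) with
  | true => exact mono_helper G c hc false B hB.1 hB.2.1 huB hvB hadj (by simpa using h)
  | false => exact mono_helper G c hc true R hR.1 hR.2.1 huR hvR hadj (by simpa using h)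
end

section
/- Let G be a graph on n vertices satisfying: (P1) G has no stable set of size z, and (P2) G has no two disjoint vertex sets of size z with no edges between them. Then in any NAC-colouring of G, some monochromatic component contains at least n - 8z vertices. -/
open SimpleGraph

/-- The spanning subgraph of `G` consisting of the edges of colour `b`. -/
def colG {V : Type*} (G : SimpleGraph V) (c : Sym2 V → Bool) (b : Bool) : SimpleGraph V where
  Adj u v := G.Adj u v ∧ c s(u, v) = b
  symm := by
    constructor
    intro u v h
    exact ⟨h.1.symm, by rw [Sym2.eq_swap]; exact h.2⟩
  loopless := ⟨fun v h => G.loopless.irrefl v h.1⟩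

/-- Crossing lemma: a maximal "covered" set below a threshold, plus one more element,
jumps to at least the threshold. -/
lemma exists_crossing {V : Type*} [Fintype V] [DecidableEq V]
    (X : Finset V) (cov : Finset V → Finset V) (hsub : ∀ S, S ⊆ cov S)
    (hcov0 : cov ∅ = ∅) (z' : ℕ) (h0 : 0 < z') (hX : z' ≤ X.card) :
    ∃ (S : Finset V) (x : V), x ∈ X ∧ x ∉ cov S ∧
      (X ∩ cov S).card < z' ∧ z' ≤ (X ∩ cov (insert x S)).card := by
  classical
  set F : Finset (Finset V) :=
    Finset.univ.powerset.filter (fun S => (X ∩ cov S).card < z') with hF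
  have hne : F.Nonempty := by
    refine ⟨∅, ?_⟩
    simp [hF, hcov0, h0]
  obtain ⟨S, hSF, hSmax⟩ := F.exists_maximal hne
  have hScard : (X ∩ cov S).card < z' := by
    simp only [hF, Finset.mem_filter] at hSF
    exact hSF.2
  have hssub : X ∩ cov S ⊂ X := by
    refine Finset.ssubset_iff_subset_ne.2 ⟨Finset.inter_subset_left, ?_⟩
    intro h
    rw [h] at hScard
    omega
  obtain ⟨x, hxX, hxnc⟩ := Finset.exists_of_ssubset hssub
  have hxcov : x ∉ cov S := fun h => hxnc (Finset.mem_inter.2 ⟨hxX, h⟩)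
  refine ⟨S, x, hxX, hxcov, hScard, ?_⟩
  by_contra h
  push_neg at h
  have hmem : insert x S ∈ F := by
    simp only [hF, Finset.mem_filter]
    exact ⟨Finset.mem_powerset.2 (Finset.subset_univ _), h⟩
  exact (ssubset_iff_subset_not_superset.1 (Finset.ssubset_insert (fun hxS => hxcov (hsub S hxS)))).2
    (hSmax hmem (Finset.subset_insert _ _))

/-- If `G` has no stable set of size `z` (P1) and no two disjoint vertex sets of size `z`
with no edges between them (P2), then every NAC-colouring of `G` has a monochromatic
component covering at least `n - 8z` vertices. -/
theorem stmt12 {V : Type*} [Fintype V] (G : SimpleGraph V) (z : ℕ) (hz : 0 < z)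
    (h8z : 8 * z ≤ Fintype.card V)
    (hP1 : ¬ ∃ S : Set V, StableSet G S ∧ S.ncard = z)
    (hP2 : ¬ ∃ A B : Set V, A.ncard = z ∧ B.ncard = z ∧ Disjoint A B ∧
      ∀ a ∈ A, ∀ b ∈ B, ¬ G.Adj a b)
    (c : Sym2 V → Bool) (hc : IsNACColouring G c) :
    ∃ (b : Bool) (H : G.Subgraph), IsMonoComponent G c b H ∧
      Fintype.card V - 8 * z ≤ H.verts.ncard := by
  classical
  set n := Fintype.card V with hn
  -- the reachability relations of the two colour subgraphs
  set rel : Bool → V → V → Prop := fun b u v => (colG G c b).Reachable u v with hrel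
  -- basic facts
  have hrefl : ∀ b v, rel b v v := fun b v => Reachable.refl v
  have hsymm : ∀ b {u v}, rel b u v → rel b v u := by
    intro b u v h; exact Reachable.symm h
  have htrans : ∀ b {u v w}, rel b u v → rel b v w → rel b u w := by
    intro b u v w h h'; exact Reachable.trans h h'
  -- an edge of colour b gives reachability
  have hadjrel : ∀ {u v}, G.Adj u v → rel (c s(u, v)) u v := by
    intro u v h
    exact Adj.reachable ⟨h, rfl⟩
  -- vertices unrelated in both colours are non-adjacent
  have hnonadj : ∀ {u v}, ¬ rel true u v → ¬ rel false u v → ¬ G.Adj u v := by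
    intro u v h1 h2 hadj
    cases hcc : c s(u, v)
    · exact h2 (by rw [← hcc]; exact hadjrel hadj)
    · exact h1 (by rw [← hcc]; exact hadjrel hadj)
  -- the main consequence of hP2
  have hsep : ∀ (A B : Finset V), z ≤ A.card → z ≤ B.card →
      (∀ t : Bool, ∀ a ∈ A, ∀ b' ∈ B, ¬ rel t a b') → False := by
    intro A B hA hB hcond
    obtain ⟨A', hA'sub, hA'card⟩ := Finset.exists_subset_card_eq hA
    obtain ⟨B', hB'sub, hB'card⟩ := Finset.exists_subset_card_eq hB
    apply hP2
    refine ⟨↑A', ↑B', ?_, ?_, ?_, ?_⟩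
    · rw [Set.ncard_coe_finset]; exact hA'card
    · rw [Set.ncard_coe_finset]; exact hB'card
    · rw [Set.disjoint_left]
      intro a haA haB
      exact hcond true a (hA'sub haA) a (hB'sub haB) (hrefl true a)
    · intro a ha b' hb' hadj
      exact hnonadj (hcond true a (hA'sub ha) b' (hB'sub hb'))
        (hcond false a (hA'sub ha) b' (hB'sub hb')) hadj
  -- every Bool is b₀ or !b₀
  have hbool : ∀ t b₀ : Bool, t = b₀ ∨ t = !b₀ := by decide
  -- lines and covers
  set line : Bool → V → Finset V :=
    fun b v => Finset.univ.filter (fun u => rel b v u) with hline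
  set cov : Bool → Finset V → Finset V :=
    fun b S => Finset.univ.filter (fun v => ∃ s ∈ S, rel b s v) with hcov
  have hmemline : ∀ {b v u}, u ∈ line b v ↔ rel b v u := by
    intro b v u; simp [hline]
  have hmemcov : ∀ {b S v}, v ∈ cov b S ↔ ∃ s ∈ S, rel b s v := by
    intro b S v; simp [hcov]
  have hsubcov : ∀ b S, S ⊆ cov b S := by
    intro b S s hs
    exact hmemcov.2 ⟨s, hs, hrefl b s⟩
  have hcov0 : ∀ b, cov b (∅ : Finset V) = ∅ := by
    intro b; ext v; simp [hcov]
  have hcovins : ∀ b x S, cov b (insert x S) ⊆ cov b S ∪ line b x := by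
    intro b x S v hv
    obtain ⟨s, hs, hrel'⟩ := hmemcov.1 hv
    rcases Finset.mem_insert.1 hs with rfl | hs
    · exact Finset.mem_union_right _ (hmemline.2 hrel')
    · exact Finset.mem_union_left _ (hmemcov.2 ⟨s, hs, hrel'⟩)
  -- cov is "closed" under rel
  have hclosed : ∀ b S {u w}, u ∈ cov b S → rel b u w → w ∈ cov b S := by
    intro b S u w hu hr
    obtain ⟨s, hs, hr'⟩ := hmemcov.1 hu
    exact hmemcov.2 ⟨s, hs, htrans b hr' hr⟩
  have hlineclosed : ∀ b x {u w}, u ∈ line b x → rel b u w → w ∈ line b x := by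
    intro b x u w hu hr
    exact hmemline.2 (htrans b (hmemline.1 hu) hr)
  -- nonemptiness of V
  have hVpos : 0 < n := by omega
  have hVne : (Finset.univ : Finset (Bool × V)).Nonempty := by
    rw [Finset.univ_nonempty_iff]
    have : Nonempty V := Fintype.card_pos_iff.1 hVpos
    infer_instance
  -- pick the largest line
  obtain ⟨p₀, _, hmax⟩ := Finset.exists_max_image Finset.univ
    (fun p : Bool × V => (line p.1 p.2).card) hVne
  set b₀ := p₀.1
  set v₀ := p₀.2
  set M := (line b₀ v₀).card with hM
  have hMmax : ∀ b v, (line b v).card ≤ M := fun b v =>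
    hmax (b, v) (Finset.mem_univ _)
  -- Step 1: M ≥ n - 8z
  have hbig : n - 8 * z ≤ M := by
    by_contra hcon
    have hM8 : M + 8 * z < n := by omega
    set C := line b₀ v₀ with hC
    set X := Cᶜ with hX
    have hcardCX : C.card + X.card = n := Finset.card_add_card_compl C
    have hXbig : 8 * z < X.card := by omega
    -- membership facts
    have hmemC : ∀ {u}, u ∈ C ↔ rel b₀ v₀ u := hmemline
    have hmemX : ∀ {u}, u ∈ X ↔ ¬ rel b₀ v₀ u := by
      intro u
      rw [hX, Finset.mem_compl]
      exact not_congr hmemC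
    -- C-vertices and X-vertices are never b₀-related
    have hrowsep : ∀ {a b'}, a ∈ C → b' ∈ X → ¬ rel b₀ a b' := by
      intro a b' ha hb' hr
      exact hmemX.1 hb' (htrans b₀ (hmemC.1 ha) hr)
    rcases le_or_gt (2 * z) (M + 1) with hM2 | hM2
    -- Case A : M ≥ 2z - 1
    · obtain ⟨S, x, hxX, hxnc, hS, hS'⟩ := exists_crossing X (cov (!b₀))
        (hsubcov (!b₀)) (hcov0 (!b₀)) z hz (by omega)
      set S' := insert x S with hS'def
      set CS := cov (!b₀) S' with hCS
      -- application 1 : |C \ CS| < z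
      have happ1 : (C \ CS).card < z := by
        by_contra h
        push_neg at h
        refine hsep (X ∩ CS) (C \ CS) hS' h ?_
        intro t a ha b' hb'
        have haX := (Finset.mem_inter.1 ha).1
        have haCS := (Finset.mem_inter.1 ha).2
        have hbC := (Finset.mem_sdiff.1 hb').1
        have hbCS := (Finset.mem_sdiff.1 hb').2
        rcases hbool t b₀ with rfl | rfl
        · intro hr
          exact hrowsep hbC haX (hsymm b₀ hr)
        · intro hr
          exact hbCS (hclosed (!b₀) S' haCS hr)
      have hCsplit : (C ∩ CS).card + (C \ CS).card = C.card :=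
        Finset.card_inter_add_card_sdiff C CS
      have hCin : z ≤ (C ∩ CS).card := by omega
      -- application 2 : |X \ CS| < z
      have happ2 : (X \ CS).card < z := by
        by_contra h
        push_neg at h
        refine hsep (C ∩ CS) (X \ CS) hCin h ?_
        intro t a ha b' hb'
        have haC := (Finset.mem_inter.1 ha).1
        have haCS := (Finset.mem_inter.1 ha).2
        have hbX := (Finset.mem_sdiff.1 hb').1
        have hbCS := (Finset.mem_sdiff.1 hb').2
        rcases hbool t b₀ with rfl | rfl
        · exact hrowsep haC hbX
        · intro hr
          exact hbCS (hclosed (!b₀) S' haCS hr)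
      have hXsplit : (X ∩ CS).card + (X \ CS).card = X.card :=
        Finset.card_inter_add_card_sdiff X CS
      -- the line of x in colour !b₀ is large in X
      set L := line (!b₀) x with hL
      have hsplitL : X ∩ CS ⊆ (X ∩ cov (!b₀) S) ∪ (X ∩ L) := by
        intro v hv
        have h1 := (Finset.mem_inter.1 hv).1
        have h2 := hcovins (!b₀) x S (Finset.mem_inter.1 hv).2
        rcases Finset.mem_union.1 h2 with h | h
        · exact Finset.mem_union_left _ (Finset.mem_inter.2 ⟨h1, h⟩)
        · exact Finset.mem_union_right _ (Finset.mem_inter.2 ⟨h1, h⟩)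
      have hcardL : (X ∩ CS).card ≤ (X ∩ cov (!b₀) S).card + (X ∩ L).card :=
        le_trans (Finset.card_le_card hsplitL) (Finset.card_union_le _ _)
      have hXL : z ≤ (X ∩ L).card := by omega
      -- application 3 : |C \ L| < z
      have happ3 : (C \ L).card < z := by
        by_contra h
        push_neg at h
        refine hsep (X ∩ L) (C \ L) hXL h ?_
        intro t a ha b' hb'
        have haX := (Finset.mem_inter.1 ha).1
        have haL := (Finset.mem_inter.1 ha).2
        have hbC := (Finset.mem_sdiff.1 hb').1
        have hbL := (Finset.mem_sdiff.1 hb').2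
        rcases hbool t b₀ with rfl | rfl
        · intro hr
          exact hrowsep hbC haX (hsymm b₀ hr)
        · intro hr
          exact hbL (hlineclosed (!b₀) x haL hr)
      have hCLsplit : (C ∩ L).card + (C \ L).card = C.card :=
        Finset.card_inter_add_card_sdiff C L
      -- C ∩ L and X ∩ L are disjoint subsets of L
      have hLbound : (C ∩ L).card + (X ∩ L).card ≤ L.card := by
        rw [← Finset.card_union_of_disjoint]
        · refine Finset.card_le_card ?_
          intro v hv
          rcases Finset.mem_union.1 hv with h | h
          · exact (Finset.mem_inter.1 h).2
          · exact (Finset.mem_inter.1 h).2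
        · refine Finset.disjoint_left.2 ?_
          intro v hv hv'
          have h1 := (Finset.mem_inter.1 hv).1
          have h2 := (Finset.mem_inter.1 hv').1
          exact (Finset.mem_compl.1 h2) h1
      have hLM : L.card ≤ M := hMmax (!b₀) x
      omega
    -- Case B : M ≤ 2z - 2
    · -- crossing on rows with threshold 2z - 1
      obtain ⟨S, x, _, _, hS, hS'⟩ := exists_crossing Finset.univ (cov b₀)
        (hsubcov b₀) (hcov0 b₀) (2 * z - 1) (by omega) (by simpa using (by omega : 2 * z - 1 ≤ n))
      set U₁ := cov b₀ (insert x S) with hU₁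
      set U₂ := U₁ᶜ with hU₂
      rw [Finset.univ_inter] at hS hS'
      have hU₁l : 2 * z - 1 ≤ U₁.card := hS'
      have hU₁u : U₁.card ≤ (cov b₀ S).card + (line b₀ x).card :=
        le_trans (Finset.card_le_card (hcovins b₀ x S)) (Finset.card_union_le _ _)
      have hlinex : (line b₀ x).card ≤ M := hMmax b₀ x
      have hU12 : U₁.card + U₂.card = n := Finset.card_add_card_compl U₁
      -- rows separate U₁ and U₂
      have hrowsep2 : ∀ {a b'}, a ∈ U₁ → b' ∈ U₂ → ¬ rel b₀ a b' := by
        intro a b' ha hb' hr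
        exact (Finset.mem_compl.1 hb') (hclosed b₀ _ ha hr)
      -- crossing on columns inside U₁
      obtain ⟨T, y, hyU₁, hync, hT, hT'⟩ := exists_crossing U₁ (cov (!b₀))
        (hsubcov (!b₀)) (hcov0 (!b₀)) z hz (by omega)
      set T' := insert y T with hT'def
      set CT := cov (!b₀) T' with hCT
      -- application 1 : |U₂ \ CT| < z
      have happ1 : (U₂ \ CT).card < z := by
        by_contra h
        push_neg at h
        refine hsep (U₁ ∩ CT) (U₂ \ CT) hT' h ?_
        intro t a ha b' hb'
        have haU := (Finset.mem_inter.1 ha).1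
        have haCT := (Finset.mem_inter.1 ha).2
        have hbU := (Finset.mem_sdiff.1 hb').1
        have hbCT := (Finset.mem_sdiff.1 hb').2
        rcases hbool t b₀ with rfl | rfl
        · exact hrowsep2 haU hbU
        · intro hr
          exact hbCT (hclosed (!b₀) T' haCT hr)
      have hU2split : (U₂ ∩ CT).card + (U₂ \ CT).card = U₂.card :=
        Finset.card_inter_add_card_sdiff U₂ CT
      -- application 2 : |U₂ ∩ cov (!b₀) T| < z
      have hU1Tsplit : (U₁ ∩ cov (!b₀) T).card + (U₁ \ cov (!b₀) T).card = U₁.card :=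
        Finset.card_inter_add_card_sdiff U₁ (cov (!b₀) T)
      have happ2 : (U₂ ∩ cov (!b₀) T).card < z := by
        by_contra h
        push_neg at h
        refine hsep (U₁ \ cov (!b₀) T) (U₂ ∩ cov (!b₀) T) (by omega) h ?_
        intro t a ha b' hb'
        have haU := (Finset.mem_sdiff.1 ha).1
        have haT := (Finset.mem_sdiff.1 ha).2
        have hbU := (Finset.mem_inter.1 hb').1
        have hbT := (Finset.mem_inter.1 hb').2
        rcases hbool t b₀ with rfl | rfl
        · exact hrowsep2 haU hbU
        · intro hr
          exact haT (hclosed (!b₀) T hbT (hsymm (!b₀) hr))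
      -- the line of y
      set L := line (!b₀) y with hL
      have hsplitL : U₂ ∩ CT ⊆ (U₂ ∩ cov (!b₀) T) ∪ (U₂ ∩ L) := by
        intro v hv
        have h1 := (Finset.mem_inter.1 hv).1
        have h2 := hcovins (!b₀) y T (Finset.mem_inter.1 hv).2
        rcases Finset.mem_union.1 h2 with h | h
        · exact Finset.mem_union_left _ (Finset.mem_inter.2 ⟨h1, h⟩)
        · exact Finset.mem_union_right _ (Finset.mem_inter.2 ⟨h1, h⟩)
      have hcardL : (U₂ ∩ CT).card ≤ (U₂ ∩ cov (!b₀) T).card + (U₂ ∩ L).card :=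
        le_trans (Finset.card_le_card hsplitL) (Finset.card_union_le _ _)
      have hLM : (U₂ ∩ L).card ≤ M :=
        le_trans (Finset.card_le_card Finset.inter_subset_right) (hMmax (!b₀) y)
      omega
  -- Step 2 : construct the monochromatic component
  set K : G.Subgraph :=
      { verts := {v | rel b₀ v₀ v}
        Adj := fun u v => (G.Adj u v ∧ c s(u, v) = b₀) ∧ rel b₀ v₀ u ∧ rel b₀ v₀ v
        adj_sub := fun h => h.1.1
        edge_vert := fun h => h.2.1
        symm := by
          constructor
          intro u v h
          refine ⟨⟨h.1.1.symm, ?_⟩, h.2.2, h.2.1⟩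
          rw [Sym2.eq_swap]
          exact h.1.2 } with hK
  have hKverts : ∀ {v}, v ∈ K.verts ↔ rel b₀ v₀ v := by intro v; rw [hK]; rfl
  have hKadj : ∀ {u v}, K.Adj u v ↔
      (G.Adj u v ∧ c s(u, v) = b₀) ∧ rel b₀ v₀ u ∧ rel b₀ v₀ v := by
    intro u v; exact Iff.rfl
  have hv₀K : v₀ ∈ K.verts := hKverts.2 (hrefl b₀ v₀)
  -- walks in the colour graph starting in the component stay inside K
  have hwalk : ∀ (u w : V) (p : (colG G c b₀).Walk u w)
      (hu : rel b₀ v₀ u) (hw : rel b₀ v₀ w),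
      K.coe.Reachable ⟨u, hKverts.2 hu⟩ ⟨w, hKverts.2 hw⟩ := by
    intro u w p
    induction p with
    | nil =>
      intro hu hw
      exact Reachable.refl _
    | @cons a b' w' h p ih =>
      intro hu hw
      have hb' : rel b₀ v₀ b' := htrans b₀ hu (Adj.reachable h)
      have hadjK : K.coe.Adj ⟨a, hKverts.2 hu⟩ ⟨b', hKverts.2 hb'⟩ := by
        refine hKadj.2 ⟨⟨h.1, h.2⟩, hu, hb'⟩
      exact Reachable.trans (Adj.reachable hadjK) (ih hb' hw)
  refine ⟨b₀, K, ⟨?_, ?_, ?_⟩, ?_⟩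
  · -- connected
    rw [SimpleGraph.Subgraph.connected_iff]
    constructor
    · constructor
      rintro ⟨u, hu⟩ ⟨w, hw⟩
      have hu' : rel b₀ v₀ u := hKverts.1 hu
      have hw' : rel b₀ v₀ w := hKverts.1 hw
      have hr : rel b₀ u w := htrans b₀ (hsymm b₀ hu') hw'
      exact hr.elim fun p => hwalk u w p hu' hw'
    · exact ⟨v₀, hv₀K⟩
  · -- all edges coloured b₀
    intro e he
    induction e using Sym2.ind with
    | _ u v =>
      rw [SimpleGraph.Subgraph.mem_edgeSet] at he
      exact (hKadj.1 he).1.2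
  · -- maximality
    intro H' hle hconn hmono
    have hv₀' : v₀ ∈ H'.verts := hle.1 hv₀K
    have hvertsub : ∀ w ∈ H'.verts, rel b₀ v₀ w := by
      intro w hw
      have hreach : H'.coe.Reachable ⟨v₀, hv₀'⟩ ⟨w, hw⟩ :=
        hconn.preconnected ⟨v₀, hv₀'⟩ ⟨w, hw⟩
      exact hreach.map
        (⟨Subtype.val, fun {a b'} hab =>
          ⟨H'.adj_sub hab, hmono _ (SimpleGraph.Subgraph.mem_edgeSet.2 hab)⟩⟩ :
            H'.coe →g colG G c b₀)
    have hle2 : H' ≤ K := by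
      show H'.verts ⊆ K.verts ∧ ∀ ⦃v w : V⦄, H'.Adj v w → K.Adj v w
      refine ⟨?_, ?_⟩
      · intro w hw
        exact hKverts.2 (hvertsub w hw)
      · intro u v huv
        refine hKadj.2 ⟨⟨H'.adj_sub huv, hmono _ (SimpleGraph.Subgraph.mem_edgeSet.2 huv)⟩,
          hvertsub u (H'.edge_vert huv), hvertsub v (H'.edge_vert huv.symm)⟩
    exact le_antisymm hle2 hle
  · -- cardinality
    have hvs : K.verts = (↑(line b₀ v₀) : Set V) := by
      ext v
      rw [hKverts, Finset.mem_coe, hmemline]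
    rw [hvs, Set.ncard_coe_finset]
    exact hbig
end

section
/- Let G be a connected graph expressible as the union of two subgraphs G₁ and G₂ with V(G₁) ∩ V(G₂) = S', where S' is a stable set in G, and suppose G has a NAC-colouring c under which the red edges are exactly the edges meeting a stable set S ⊇ S' with S ∩ (V(G₁) \ S') possibly nonempty. Define c₁ by colouring an edge red if and only if it meets S' and lies in G₁, all other edges blue. If c₁ uses both colours, then c₁ is a NAC-colouring of G. -/
open SimpleGraph

private lemma zmod2_ne_iff (a b : ZMod 2) : a ≠ b ↔ a + b = 1 := by revert a b; decide

private noncomputable def ind {V : Type*} (A : Set V) (v : V) : ZMod 2 :=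
  open Classical in if v ∈ A then 1 else 0

private lemma ind_ne_iff {V : Type*} (A : Set V) (x y : V) :
    ind A x ≠ ind A y ↔ ((x ∈ A ∧ y ∉ A) ∨ (y ∈ A ∧ x ∉ A)) := by
  classical
  simp only [ind]
  by_cases hx : x ∈ A <;> by_cases hy : y ∈ A <;> simp [hx, hy]

private lemma walk_filter_parity {V : Type*} {G : SimpleGraph V} (P : Sym2 V → Bool)
    (φ : V → ZMod 2) (hP : ∀ a b : V, G.Adj a b → (P s(a, b) = true ↔ φ a ≠ φ b)) :
    ∀ {u v : V} (w : G.Walk u v), ((w.edges.filter P).length : ZMod 2) = φ u + φ v := by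
  intro u v w
  induction w with
  | nil => simp [CharTwo.add_self_eq_zero]
  | @cons a x v h p ih =>
    rw [Walk.edges_cons, List.filter_cons]
    by_cases hp : P s(a, x) = true
    · rw [if_pos hp]
      have h1 : φ a + φ x = 1 := (zmod2_ne_iff _ _).mp ((hP a x h).mp hp)
      have h2 : (2 : ZMod 2) = 0 := by decide
      push_cast [List.length_cons]
      linear_combination ih - h1 + φ x * h2
    · rw [if_neg hp]
      have h1 : φ a = φ x := by
        by_contra hne
        exact hp ((hP a x h).mpr hne)
      rw [h1]; exact ih

private lemma filter_mono_length {α : Type*} (p q : α → Bool) :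
    ∀ (l : List α), (∀ x ∈ l, p x = true → q x = true) →
      (l.filter p).length ≤ (l.filter q).length := by
  intro l
  induction l with
  | nil => simp
  | cons a l ih =>
    intro h
    have hl := ih fun x hx => h x (List.mem_cons_of_mem _ hx)
    simp only [List.filter_cons]
    by_cases hp : p a = true
    · rw [if_pos hp, if_pos (h a List.mem_cons_self hp)]
      simpa using hl
    · rw [if_neg hp]
      split
      · exact le_trans hl (Nat.le_succ _)
      · exact hl

private lemma filter_add_filter_not {α : Type*} (p : α → Bool) :
    ∀ (l : List α), (l.filter p).length + (l.filter fun x => !(p x)).length = l.length := by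
  intro l
  induction l with
  | nil => simp
  | cons a l ih =>
    simp only [List.filter_cons]
    by_cases hp : p a = true <;> simp [hp, ← ih] <;> omega

/-- Let `G` be connected and the union of subgraphs `G₁, G₂` intersecting in the stable set
`S'`, and let `c` be a NAC-colouring whose red edges are exactly those meeting a stable set
`S ⊇ S'`. Colouring red exactly the edges of `G₁` meeting `S'` gives, provided both colours
are used, a NAC-colouring of `G`. -/
theorem stmt19 {V : Type*} (G : SimpleGraph V) (hG : G.Connected)
    (G₁ G₂ : G.Subgraph) (hunion : G₁ ⊔ G₂ = ⊤)
    (S' : Set V) (hS' : G₁.verts ∩ G₂.verts = S') (hS'stable : StableSet G S')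
    (S : Set V) (hSS : S' ⊆ S) (hSstable : StableSet G S)
    (c : Sym2 V → Bool) (hc : IsNACColouring G c)
    (hred : ∀ e ∈ G.edgeSet, (c e = true ↔ ∃ v ∈ S, v ∈ e))
    (c₁ : Sym2 V → Bool)
    (hc₁ : ∀ e ∈ G.edgeSet, (c₁ e = true ↔ (e ∈ G₁.edgeSet ∧ ∃ v ∈ S', v ∈ e)))
    (hboth : (∃ e ∈ G.edgeSet, c₁ e = true) ∧ ∃ e ∈ G.edgeSet, c₁ e = false) :
    IsNACColouring G c₁ := by
  classical
  obtain ⟨_, _, hcyc⟩ := hc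
  -- every edge of G is in G₁ or G₂
  have hcases : ∀ a b : V, G.Adj a b → G₁.Adj a b ∨ G₂.Adj a b := by
    intro a b hab
    have h : (G₁ ⊔ G₂).Adj a b := by rw [hunion]; exact hab
    exact h
  -- key asymmetric step for the coboundary characterisation of c₁
  have key : ∀ a b : V, G.Adj a b → (a ∈ G₁.verts ∧ a ∉ S') → ¬(b ∈ G₁.verts ∧ b ∉ S') →
      G₁.Adj a b ∧ b ∈ S' := by
    intro a b hab ha hb
    have h1 : G₁.Adj a b := by
      rcases hcases a b hab with h | h
      · exact h
      · exact absurd (hS' ▸ Set.mem_inter ha.1 h.fst_mem) ha.2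
    have hb1 : b ∈ G₁.verts := h1.snd_mem
    refine ⟨h1, ?_⟩
    by_contra hb2
    exact hb ⟨hb1, hb2⟩
  -- coboundary function for c₁
  set D : Set V := {v | v ∈ G₁.verts ∧ v ∉ S'} with hDdef
  have hD : ∀ x : V, x ∈ D ↔ (x ∈ G₁.verts ∧ x ∉ S') := fun x => Iff.rfl
  have hPc₁ : ∀ a b : V, G.Adj a b → (c₁ s(a, b) = true ↔ ind D a ≠ ind D b) := by
    intro a b hab
    rw [hc₁ s(a, b) (G.mem_edgeSet.mpr hab), ind_ne_iff]
    have hmem : (∃ v ∈ S', v ∈ s(a, b)) ↔ (a ∈ S' ∨ b ∈ S') := by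
      constructor
      · rintro ⟨x, hx, hv⟩
        rw [Sym2.mem_iff] at hv
        rcases hv with rfl | rfl
        · exact Or.inl hx
        · exact Or.inr hx
      · rintro (h | h)
        · exact ⟨a, h, Sym2.mem_iff.mpr (Or.inl rfl)⟩
        · exact ⟨b, h, Sym2.mem_iff.mpr (Or.inr rfl)⟩
    rw [hmem]
    simp only [hD]
    constructor
    · rintro ⟨h1, hS | hS⟩
      · have hb2 : b ∉ S' := fun hb => hS'stable hS hb hab
        exact Or.inr ⟨⟨h1.snd_mem, hb2⟩, fun h => h.2 hS⟩
      · have ha2 : a ∉ S' := fun ha => hS'stable ha hS hab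
        exact Or.inl ⟨⟨h1.fst_mem, ha2⟩, fun h => h.2 hS⟩
    · rintro (⟨ha, hb⟩ | ⟨hb, ha⟩)
      · obtain ⟨h1, h2⟩ := key a b hab ha hb
        exact ⟨h1, Or.inr h2⟩
      · obtain ⟨h1, h2⟩ := key b a hab.symm hb ha
        exact ⟨h1.symm, Or.inl h2⟩
  -- coboundary function for c
  have hPc : ∀ a b : V, G.Adj a b → (c s(a, b) = true ↔ ind S a ≠ ind S b) := by
    intro a b hab
    rw [hred s(a, b) (G.mem_edgeSet.mpr hab), ind_ne_iff]
    have hmem : (∃ v ∈ S, v ∈ s(a, b)) ↔ (a ∈ S ∨ b ∈ S) := by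
      constructor
      · rintro ⟨x, hx, hv⟩
        rw [Sym2.mem_iff] at hv
        rcases hv with rfl | rfl
        · exact Or.inl hx
        · exact Or.inr hx
      · rintro (h | h)
        · exact ⟨a, h, Sym2.mem_iff.mpr (Or.inl rfl)⟩
        · exact ⟨b, h, Sym2.mem_iff.mpr (Or.inr rfl)⟩
    rw [hmem]
    constructor
    · rintro (hS | hS)
      · exact Or.inl ⟨hS, fun hb => hSstable hS hb hab⟩
      · exact Or.inr ⟨hS, fun ha => hSstable ha hS hab⟩
    · rintro (⟨h, _⟩ | ⟨h, _⟩)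
      · exact Or.inl h
      · exact Or.inr h
  refine ⟨hboth.1, hboth.2, ?_⟩
  intro v w hw
  have hedge : ∀ e ∈ w.edges, e ∈ G.edgeSet := fun e he => w.edges_subset_edgeSet he
  -- the number of c₁-red edges of any closed walk is even
  have hredpar : ((w.edges.filter fun e => c₁ e).length : ZMod 2) = 0 := by
    have := walk_filter_parity c₁ (ind D) hPc₁ w
    simpa [CharTwo.add_self_eq_zero] using this
  constructor
  · intro h1
    rw [h1] at hredpar
    simp at hredpar
  · intro hb1
    -- every c-blue edge is c₁-blue
    have hmono : (w.edges.filter fun e => !(c e)).length ≤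
        (w.edges.filter fun e => !(c₁ e)).length := by
      apply filter_mono_length
      intro e he h
      simp only [Bool.not_eq_true'] at h ⊢
      by_contra hcc
      have hcc' : c₁ e = true := by
        cases hc' : c₁ e
        · exact absurd hc' hcc
        · rfl
      obtain ⟨_, x, hx1, hx2⟩ := (hc₁ e (hedge e he)).mp hcc'
      have hce : c e = true := (hred e (hedge e he)).mpr ⟨x, hSS hx1, hx2⟩
      rw [hce] at h
      simp at h
    have hcne := (hcyc w hw).2
    have hc0 : (w.edges.filter fun e => !(c e)).length = 0 := by omega
    have hall : ∀ e ∈ w.edges, c e = true := by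
      rw [List.length_eq_zero_iff, List.filter_eq_nil_iff] at hc0
      intro e he
      have := hc0 e he
      simpa using this
    -- all edges are c-red, so the length is even
    have hlen : ((w.edges.length : ZMod 2)) = 0 := by
      have h1 : w.edges.filter (fun e => c e) = w.edges :=
        List.filter_eq_self.mpr fun e he => by simp [hall e he]
      have := walk_filter_parity c (ind S) hPc w
      rw [h1] at this
      simpa [CharTwo.add_self_eq_zero] using this
    have hsum := filter_add_filter_not (fun e => c₁ e) w.edges
    have hfin : ((w.edges.filter fun e => !(c₁ e)).length : ZMod 2) = 0 := by
      have hcast : ((w.edges.filter fun e => c₁ e).length : ZMod 2) +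
          ((w.edges.filter fun e => !(c₁ e)).length : ZMod 2) = (w.edges.length : ZMod 2) := by
        exact_mod_cast congrArg (Nat.cast : ℕ → ZMod 2) hsum
      rw [hredpar, hlen, zero_add] at hcast
      exact hcast
    rw [hb1] at hfin
    simp at hfin
end
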